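/- arXiv:2407.02146 — 5 statements merged into one kernel-verified Lean document; each statement's English description precedes it below -/
import Mathlib

section
/- Let {α_k}, {β_k}, {γ_k} be sequences of positive real numbers, and suppose there exist constants c1, c2, c3 > 0 such that for all sufficiently large k: (i) α_k − α_{k+1} ≥ c1·β_k², (ii) β_k ≥ c2·γ_k, (iii) c3·γ_k² ≥ α_k. Then {α_k} converges to zero Q-linearly (i.e., there is μ ∈ (0,1) with α_{k+1} ≤ μ·α_k for all large k), and {β_k} and {γ_k} converge to zero R-linearly (i.e., are bounded by c·μ^k for some c > 0, μ ∈ (0,1)). -/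
open Filter Topology

set_option maxHeartbeats 1000000 in
/-- Lemma on linear convergence of sequences. -/
theorem stmt_0 (α β γ : ℕ → ℝ)
    (hα : ∀ k, 0 < α k) (hβ : ∀ k, 0 < β k) (hγ : ∀ k, 0 < γ k)
    (c₁ c₂ c₃ : ℝ) (hc₁ : 0 < c₁) (hc₂ : 0 < c₂) (hc₃ : 0 < c₃)
    (h : ∃ N, ∀ k ≥ N,
      α k - α (k + 1) ≥ c₁ * (β k) ^ 2 ∧ β k ≥ c₂ * γ k ∧ c₃ * (γ k) ^ 2 ≥ α k) :
    (Tendsto α atTop (𝓝 0) ∧ ∃ μ : ℝ, 0 < μ ∧ μ < 1 ∧ ∃ N, ∀ k ≥ N, α (k + 1) ≤ μ * α k) ∧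
    (∃ c : ℝ, 0 < c ∧ ∃ μ : ℝ, 0 < μ ∧ μ < 1 ∧ ∃ N, ∀ k ≥ N, β k ≤ c * μ ^ k) ∧
    (∃ c : ℝ, 0 < c ∧ ∃ μ : ℝ, 0 < μ ∧ μ < 1 ∧ ∃ N, ∀ k ≥ N, γ k ≤ c * μ ^ k) := by
  obtain ⟨N, hN⟩ := h
  set μ : ℝ := 1 - c₁ * c₂ ^ 2 / c₃ with hμdef
  have key : ∀ k ≥ N, α (k + 1) ≤ μ * α k := by
    intro k hk
    obtain ⟨h1, h2, h3⟩ := hN k hk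
    have hγk := hγ k; have hβk := hβ k; have hαk := hα k
    have hb2 : β k ^ 2 ≥ (c₂ * γ k) ^ 2 :=
      pow_le_pow_left₀ (by positivity) h2 2
    have hab : α k - α (k + 1) ≥ c₁ * c₂ ^ 2 * γ k ^ 2 := by nlinarith
    have hg2 : c₁ * c₂ ^ 2 * γ k ^ 2 ≥ c₁ * c₂ ^ 2 / c₃ * α k := by
      rw [ge_iff_le, div_mul_eq_mul_div, div_le_iff₀ hc₃]
      nlinarith [mul_le_mul_of_nonneg_left h3 (by positivity : (0:ℝ) ≤ c₁ * c₂ ^ 2)]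
    have : α (k + 1) ≤ (1 - c₁ * c₂ ^ 2 / c₃) * α k := by nlinarith
    simpa [hμdef] using this
  have hμ1 : μ < 1 := by
    have h0 : 0 < c₁ * c₂ ^ 2 / c₃ := by positivity
    simp only [hμdef]; linarith
  have hμ0 : 0 < μ := by
    have h1 := key N le_rfl
    have h2 := hα (N + 1); have h3 := hα N
    nlinarith
  have geom0 : ∀ m, α (N + m) ≤ α N * μ ^ m := by
    intro m
    induction m with
    | zero => simp
    | succ m ih =>
      have hk := key (N + m) (Nat.le_add_right N m)
      have hrw : N + (m + 1) = (N + m) + 1 := by ring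
      rw [hrw]
      calc α ((N + m) + 1) ≤ μ * α (N + m) := hk
        _ ≤ μ * (α N * μ ^ m) := by nlinarith
        _ = α N * μ ^ (m + 1) := by ring
  set C : ℝ := α N / μ ^ N with hCdef
  have hCpos : 0 < C := div_pos (hα N) (pow_pos hμ0 N)
  have geom : ∀ k ≥ N, α k ≤ C * μ ^ k := by
    intro k hk
    obtain ⟨m, rfl⟩ := Nat.exists_eq_add_of_le hk
    have heq : C * μ ^ (N + m) = α N * μ ^ m := by
      rw [hCdef, pow_add]
      field_simp
    rw [heq]
    exact geom0 m
  have htend : Tendsto α atTop (𝓝 0) := by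
    have hupper : Tendsto (fun k => C * μ ^ k) atTop (𝓝 0) := by
      have := (tendsto_pow_atTop_nhds_zero_of_lt_one hμ0.le hμ1).const_mul C
      simpa using this
    refine tendsto_of_tendsto_of_tendsto_of_le_of_le' tendsto_const_nhds hupper ?_ ?_
    · exact Eventually.of_forall fun k => (hα k).le
    · filter_upwards [eventually_ge_atTop N] with k hk using geom k hk
  set ν : ℝ := Real.sqrt μ with hνdef
  have hν0 : 0 < ν := Real.sqrt_pos.mpr hμ0
  have hν2 : ν ^ 2 = μ := Real.sq_sqrt hμ0.le
  have hν1 : ν < 1 := by nlinarith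
  set cβ : ℝ := Real.sqrt (C / c₁) with hcβdef
  have hcβ0 : 0 < cβ := Real.sqrt_pos.mpr (by positivity)
  have hcβ2 : cβ ^ 2 = C / c₁ := Real.sq_sqrt (by positivity)
  have hβbd : ∀ k ≥ N, β k ≤ cβ * ν ^ k := by
    intro k hk
    obtain ⟨h1, h2, h3⟩ := hN k hk
    have hαk1 := hα (k + 1)
    have hb2 : c₁ * β k ^ 2 ≤ C * μ ^ k := by
      have := geom k hk
      nlinarith
    have hsq : β k ^ 2 ≤ (cβ * ν ^ k) ^ 2 := by
      have heq : (cβ * ν ^ k) ^ 2 = C / c₁ * μ ^ k := by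
        rw [mul_pow, hcβ2, ← pow_mul, mul_comm k 2, pow_mul, hν2]
      rw [heq, div_mul_eq_mul_div, le_div_iff₀ hc₁]
      nlinarith
    have hβk := hβ k
    have hpos : 0 < cβ * ν ^ k := by positivity
    nlinarith
  refine ⟨⟨htend, μ, hμ0, hμ1, N, key⟩, ⟨cβ, hcβ0, ν, hν0, hν1, N, hβbd⟩, ?_⟩
  refine ⟨cβ / c₂, by positivity, ν, hν0, hν1, N, fun k hk => ?_⟩
  obtain ⟨h1, h2, h3⟩ := hN k hk
  have := hβbd k hk
  rw [div_mul_eq_mul_div, le_div_iff₀ hc₂]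
  nlinarith
end

section
/- Let φ : ℝⁿ → ℝ be C¹ with an l-Lipschitz gradient on a set containing all iterates x^k and x^k + τ_k d^k. Suppose each stepsize τ_k satisfies the Wolfe curvature condition ⟨∇φ(x^k + τ_k d^k), d^k⟩ ≥ σ₂⟨∇φ(x^k), d^k⟩ with σ₂ ∈ (0,1), and that m‖d^k‖² ≤ ⟨−∇φ(x^k), d^k⟩ and ‖∇φ(x^k)‖ ≤ M‖d^k‖ for constants M ≥ m > 0. Then τ_k ≥ (1−σ₂)m/l for all k, and consequently ‖∇φ(x^{k+1})‖ ≤ (l + Ml/((1−σ₂)m))‖x^{k+1} − x^k‖, where x^{k+1} = x^k + τ_k d^k. -/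
open Filter Topology
open scoped RealInnerProductSpace

/-- Stepsize lower bound and relative error property (H2) for the modified
regularized Newton method with Wolfe linesearch. -/
theorem stmt_7 {n : ℕ} (φ : EuclideanSpace ℝ (Fin n) → ℝ)
    (φ' : EuclideanSpace ℝ (Fin n) → EuclideanSpace ℝ (Fin n))
    (U : Set (EuclideanSpace ℝ (Fin n)))
    (hgrad : ∀ x ∈ U, HasGradientAt φ (φ' x) x)
    (l : ℝ) (hl : 0 < l) (hLip : ∀ y ∈ U, ∀ z ∈ U, ‖φ' y - φ' z‖ ≤ l * ‖y - z‖)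
    (σ₂ m M : ℝ) (hσ₂ : 0 < σ₂) (hσ₂' : σ₂ < 1) (hm : 0 < m) (hM : m ≤ M)
    (x : ℕ → EuclideanSpace ℝ (Fin n)) (τ : ℕ → ℝ) (d : ℕ → EuclideanSpace ℝ (Fin n))
    (hxU : ∀ k, x k ∈ U) (hxU' : ∀ k, x k + τ k • d k ∈ U)
    (hstep : ∀ k, x (k + 1) = x k + τ k • d k)
    (hτ : ∀ k, 0 < τ k)
    (hgrad0 : ∀ k, φ' (x k) ≠ 0)
    (hcurv : ∀ k, ⟪φ' (x k + τ k • d k), d k⟫ ≥ σ₂ * ⟪φ' (x k), d k⟫)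
    (hdir : ∀ k, m * ‖d k‖ ^ 2 ≤ ⟪-φ' (x k), d k⟫)
    (hdir' : ∀ k, ‖φ' (x k)‖ ≤ M * ‖d k‖) :
    ∀ k, τ k ≥ (1 - σ₂) * m / l ∧
      ‖φ' (x (k + 1))‖ ≤ (l + M * l / ((1 - σ₂) * m)) * ‖x (k + 1) - x k‖ := by
  intro k
  have hgp : 0 < ‖φ' (x k)‖ := norm_pos_iff.mpr (hgrad0 k)
  have hd0 : d k ≠ 0 := by
    intro h
    have := hdir' k
    rw [h, norm_zero, mul_zero] at this
    linarith
  have hdn : 0 < ‖d k‖ := norm_pos_iff.mpr hd0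
  -- inner products
  have hdirk := hdir k
  rw [inner_neg_left] at hdirk
  have hcurvk := hcurv k
  have hlip1 : ‖φ' (x k + τ k • d k) - φ' (x k)‖ ≤ l * (τ k * ‖d k‖) := by
    have := hLip _ (hxU' k) _ (hxU k)
    simpa [norm_smul, abs_of_pos (hτ k), mul_assoc] using this
  have hinner : ⟪φ' (x k + τ k • d k) - φ' (x k), d k⟫ ≤ l * (τ k * ‖d k‖) * ‖d k‖ :=
    le_trans (real_inner_le_norm _ _) (by
      have := mul_le_mul_of_nonneg_right hlip1 (norm_nonneg (d k))
      linarith)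
  have hsub : ⟪φ' (x k + τ k • d k) - φ' (x k), d k⟫
      = ⟪φ' (x k + τ k • d k), d k⟫ - ⟪φ' (x k), d k⟫ := inner_sub_left _ _ _
  have hkey : (1 - σ₂) * m * ‖d k‖ ^ 2 ≤ l * τ k * ‖d k‖ ^ 2 := by
    nlinarith [hinner, hsub, hcurvk, hdirk]
  have htau : τ k ≥ (1 - σ₂) * m / l := by
    rw [ge_iff_le, div_le_iff₀ hl]
    have hsq : 0 < ‖d k‖ ^ 2 := by positivity
    nlinarith
  refine ⟨htau, ?_⟩
  have hΔ : ‖x (k + 1) - x k‖ = τ k * ‖d k‖ := by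
    rw [hstep k]
    simp [norm_smul, abs_of_pos (hτ k)]
  have hmem : x (k + 1) ∈ U := by rw [hstep k]; exact hxU' k
  have hlip2 : ‖φ' (x (k + 1)) - φ' (x k)‖ ≤ l * ‖x (k + 1) - x k‖ :=
    hLip _ hmem _ (hxU k)
  have htri : ‖φ' (x (k + 1))‖ ≤ ‖φ' (x (k + 1)) - φ' (x k)‖ + ‖φ' (x k)‖ := by
    simpa using norm_add_le (φ' (x (k + 1)) - φ' (x k)) (φ' (x k))
  have hpos : 0 < (1 - σ₂) * m := by nlinarith
  have hdle : ‖d k‖ ≤ l / ((1 - σ₂) * m) * ‖x (k + 1) - x k‖ := by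
    rw [hΔ]
    rw [div_mul_eq_mul_div, le_div_iff₀ hpos]
    have : (1 - σ₂) * m / l ≤ τ k := htau
    rw [div_le_iff₀ hl] at this
    nlinarith
  have hMd : M * ‖d k‖ ≤ M * (l / ((1 - σ₂) * m) * ‖x (k + 1) - x k‖) :=
    mul_le_mul_of_nonneg_left hdle (by linarith)
  have := hdir' k
  have hfinal : ‖φ' (x (k + 1))‖ ≤ l * ‖x (k + 1) - x k‖
      + M * (l / ((1 - σ₂) * m) * ‖x (k + 1) - x k‖) := by linarith
  calc ‖φ' (x (k + 1))‖ ≤ l * ‖x (k + 1) - x k‖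
      + M * (l / ((1 - σ₂) * m) * ‖x (k + 1) - x k‖) := hfinal
    _ = (l + M * l / ((1 - σ₂) * m)) * ‖x (k + 1) - x k‖ := by ring
end

section
/- Let S : ℝ^d → ℝⁿ be locally Lipschitz continuous around x̄, and let A : ℝⁿ → ℝ^m be a linear map. Then the limiting (Mordukhovich) coderivative of the composition G = A ∘ S satisfies D*G(x̄)(v) = D*S(x̄)(A*v) for all v ∈ ℝ^m, where A* is the adjoint of A. -/
set_option maxHeartbeats 1000000


open Filter Topology Metric
open scoped RealInnerProductSpace

/-- The regular (Fréchet) coderivative of a single-valued map `f` at `x̄`,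
defined via the limsup quotient condition on regular normals to the graph. -/
def fCoderiv {E F : Type*} [NormedAddCommGroup E] [InnerProductSpace ℝ E]
    [NormedAddCommGroup F] [InnerProductSpace ℝ F]
    (f : E → F) (xb : E) (v : F) : Set E :=
  {u | ∀ ε > 0, ∀ᶠ x in nhds xb,
    ⟪u, x - xb⟫ - ⟪v, f x - f xb⟫ ≤ ε * (‖x - xb‖ + ‖f x - f xb‖)}

/-- The limiting (Mordukhovich) coderivative of a single-valued map `f` at `x̄`:
limits of regular coderivative elements along sequences converging to `x̄`. -/
def lCoderiv {E F : Type*} [NormedAddCommGroup E] [InnerProductSpace ℝ E]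
    [NormedAddCommGroup F] [InnerProductSpace ℝ F]
    (f : E → F) (xb : E) (v : F) : Set E :=
  {u | ∃ (xs : ℕ → E) (vs : ℕ → F) (us : ℕ → E),
    Filter.Tendsto xs Filter.atTop (nhds xb) ∧
    Filter.Tendsto vs Filter.atTop (nhds v) ∧
    Filter.Tendsto us Filter.atTop (nhds u) ∧
    ∀ k, us k ∈ fCoderiv f (xs k) (vs k)}

lemma withlp_norm_bounds {E F : Type*} [NormedAddCommGroup E] [InnerProductSpace ℝ E]
    [NormedAddCommGroup F] [InnerProductSpace ℝ F] (z : WithLp 2 (E × F)) :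
    ‖z.fst‖ ≤ ‖z‖ ∧ ‖z.snd‖ ≤ ‖z‖ ∧ ‖z‖ ≤ ‖z.fst‖ + ‖z.snd‖ ∧ ‖z.fst‖ + ‖z.snd‖ ≤ 2*‖z‖ := by
  have h := WithLp.prod_norm_sq_eq_of_L2 z
  have h0 : (0:ℝ) ≤ ‖z‖ := norm_nonneg z
  have h1 : (0:ℝ) ≤ ‖z.fst‖ := norm_nonneg _
  have h2 : (0:ℝ) ≤ ‖z.snd‖ := norm_nonneg _
  refine ⟨?_, ?_, ?_, ?_⟩
  · rw [← pow_le_pow_iff_left₀ h1 h0 (two_ne_zero)]; nlinarith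
  · rw [← pow_le_pow_iff_left₀ h2 h0 (two_ne_zero)]; nlinarith
  · rw [← pow_le_pow_iff_left₀ h0 (by positivity) (two_ne_zero)]; nlinarith
  · rw [← pow_le_pow_iff_left₀ (by positivity) (by positivity : (0:ℝ) ≤ 2*‖z‖) (two_ne_zero)]; nlinarith

theorem removal {E F : Type*} [NormedAddCommGroup E] [InnerProductSpace ℝ E]
    [NormedAddCommGroup F] [InnerProductSpace ℝ F]
    [FiniteDimensional ℝ E] [FiniteDimensional ℝ F]
    (f : E → F) (xb : E) (r δ ρ : ℝ) (hr : 0 < r) (hδ : 0 ≤ δ) (hρ : 0 < ρ)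
    (hf : ContinuousOn f (closedBall xb r))
    (u : E) (w : F)
    (H : ∀ ε > 0, ∀ᶠ x in nhds xb,
      ⟪u, x - xb⟫ - ⟪w, f x - f xb⟫ ≤ (ε + δ) * (‖x - xb‖ + ‖f x - f xb‖)) :
    ∃ x' u' w', ‖x' - xb‖ < ρ ∧ ‖u' - u‖ ≤ 4*δ + ρ ∧ ‖w' - w‖ ≤ 4*δ + ρ ∧
      u' ∈ fCoderiv f x' w' := by
  -- extract a radius on which the approximate inequality holds
  obtain ⟨r₂, hr₂, hball⟩ := Metric.eventually_nhds_iff.mp (H (ρ/8) (by positivity))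
  set r' : ℝ := min r (r₂/2) with hr'def
  have hr' : 0 < r' := lt_min hr (by positivity)
  have hr'r : r' ≤ r := min_le_left _ _
  have hr'r₂ : r' < r₂ := lt_of_le_of_lt (min_le_right _ _) (by linarith)
  set δ' : ℝ := 2*(ρ/8 + δ) with hδ'def
  have hδ'pos : 0 < δ' := by positivity
  -- the graph piece, inside the L² product space
  set ι : E × F → WithLp 2 (E × F) := fun z => (WithLp.equiv 2 (E × F)).symm z with hιdef
  set zb : WithLp 2 (E × F) := ι (xb, f xb) with hzb
  set p : WithLp 2 (E × F) := ι (u, -w) with hp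
  set K : Set (WithLp 2 (E × F)) := (fun x => ι (x, f x)) '' closedBall xb r' with hK
  have hfr' : ContinuousOn f (closedBall xb r') := hf.mono (closedBall_subset_closedBall hr'r)
  have hKcpt : IsCompact K := by
    apply (isCompact_closedBall xb r').image_of_continuousOn
    exact (WithLp.prod_continuous_toLp 2 E F).comp_continuousOn
      (continuousOn_id.prodMk hfr')
  have hKne : K.Nonempty := ⟨_, ⟨xb, mem_closedBall_self hr'.le, rfl⟩⟩
  -- component computations
  have hcomp : ∀ x : E, ((ι (x, f x)) - zb).fst = x - xb ∧ ((ι (x, f x)) - zb).snd = f x - f xb := by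
    intro x; constructor <;> rfl
  -- the δ'-normal inequality on K
  have hKineq : ∀ z ∈ K, ⟪p, z - zb⟫ ≤ δ' * ‖z - zb‖ := by
    rintro z ⟨x, hx, rfl⟩
    have hxr₂ : dist x xb < r₂ := lt_of_le_of_lt (mem_closedBall.mp hx) hr'r₂
    have h1 := hball hxr₂
    have hin : ⟪p, ι (x, f x) - zb⟫ = ⟪u, x - xb⟫ - ⟪w, f x - f xb⟫ := by
      rw [WithLp.prod_inner_apply]
      have e1 : (ι (x, f x) - zb).fst = x - xb := rfl
      have e2 : (ι (x, f x) - zb).snd = f x - f xb := rfl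
      have e3 : p.fst = u := rfl
      have e4 : p.snd = -w := rfl
      rw [show (ι (x, f x) - zb).ofLp.1 = x - xb from e1, show (ι (x, f x) - zb).ofLp.2 = f x - f xb from e2,
        show p.ofLp.1 = u from e3, show p.ofLp.2 = -w from e4, inner_neg_left]; ring
    have hb := (withlp_norm_bounds (ι (x, f x) - zb)).2.2.2
    have e1 : (ι (x, f x) - zb).fst = x - xb := rfl
    have e2 : (ι (x, f x) - zb).snd = f x - f xb := rfl
    rw [e1, e2] at hb
    rw [hin]
    have : (0:ℝ) ≤ ρ/8 + δ := by positivity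
    nlinarith [norm_nonneg (ι (x, f x) - zb)]
  -- choose t
  set c : ℝ := min ρ (r'/2) with hcdef
  have hc : 0 < c := lt_min hρ (by positivity)
  set t : ℝ := c / (4*δ') with htdef
  have ht : 0 < t := by positivity
  have h2t : 2*t*δ' = c/2 := by
    have ht4 : t*(4*δ') = c := div_mul_cancel₀ c (ne_of_gt (by positivity))
    linear_combination ht4/2
  -- project zb + t•p onto K
  set a : WithLp 2 (E × F) := zb + t • p with ha
  obtain ⟨zt, hztK, hmin⟩ := hKcpt.exists_isMinOn hKne
    ((continuous_const.dist continuous_id).continuousOn : ContinuousOn (fun z => dist a z) K)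
  have hmin' : ∀ z ∈ K, dist a zt ≤ dist a z := fun z hz => hmin hz
  obtain ⟨x', hx'ball, hx'eq⟩ := hztK
  -- ‖zt - zb‖ ≤ 2tδ'
  have hazb : a - zb = t • p := by rw [ha]; abel
  have hazt : a - zt = t • p - (zt - zb) := by rw [ha]; abel
  have hdistzb : dist a zb = t * ‖p‖ := by
    rw [dist_eq_norm, hazb, norm_smul, Real.norm_eq_abs, abs_of_pos ht]
  have hest : dist a zt ≤ t * ‖p‖ := hdistzb ▸ hmin' zb ⟨xb, mem_closedBall_self hr'.le, rfl⟩
  have hexp : ‖a - zt‖^2 = (t*‖p‖)^2 - 2*(t*⟪p, zt - zb⟫) + ‖zt - zb‖^2 := by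
    rw [hazt, @norm_sub_sq_real, norm_smul, Real.norm_eq_abs, abs_of_pos ht,
      real_inner_smul_left, mul_pow]
  have hptz : ⟪p, zt - zb⟫ ≤ δ' * ‖zt - zb‖ := hKineq zt ⟨x', hx'ball, hx'eq⟩
  have hztzb : ‖zt - zb‖ ≤ 2*t*δ' := by
    have h1 : ‖a - zt‖^2 ≤ (t*‖p‖)^2 := by
      rw [← dist_eq_norm]
      exact pow_le_pow_left₀ dist_nonneg hest 2
    have h2 : ‖zt - zb‖^2 ≤ 2*t*δ'*‖zt - zb‖ := by nlinarith
    by_contra hcon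
    push_neg at hcon
    nlinarith [norm_nonneg (zt - zb)]
  -- the proximal normal
  obtain ⟨q, hq⟩ : ∃ q, q = a - zt := ⟨_, rfl⟩
  have hqtp : ‖q - t • p‖ ≤ 2*t*δ' := by
    have h0 : q - t • p = zb - zt := by rw [hq, ha]; abel
    rw [h0, norm_sub_rev]; exact hztzb
  have hprox : ∀ z ∈ K, ⟪q, z - zt⟫ ≤ ‖z - zt‖^2 / 2 := by
    intro z hz
    have h1 : ‖q‖^2 ≤ ‖q - (z - zt)‖^2 := by
      rw [hq]
      have h2 : a - zt - (z - zt) = a - z := by abel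
      rw [h2, ← dist_eq_norm, ← dist_eq_norm]
      exact pow_le_pow_left₀ dist_nonneg (hmin' z hz) 2
    have h3 : ‖q - (z - zt)‖^2 = ‖q‖^2 - 2*⟪q, z - zt⟫ + ‖z - zt‖^2 :=
      @norm_sub_sq_real _ _ _ _ _
    linarith
  obtain ⟨p', hp'⟩ : ∃ p', p' = t⁻¹ • q := ⟨_, rfl⟩
  have hp'p : ‖p' - p‖ ≤ 2*δ' := by
    have h1 : p' - p = t⁻¹ • (q - t • p) := by
      rw [hp', smul_sub, smul_smul, inv_mul_cancel₀ ht.ne', one_smul]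
    rw [h1, norm_smul, Real.norm_eq_abs, abs_of_pos (by positivity)]
    calc t⁻¹ * ‖q - t • p‖ ≤ t⁻¹ * (2*t*δ') := by
          exact mul_le_mul_of_nonneg_left hqtp (by positivity)
      _ = 2*δ' := by field_simp
  refine ⟨x', p'.fst, -p'.snd, ?_, ?_, ?_, ?_⟩
  · -- ‖x' - xb‖ < ρ
    have h1 : ‖x' - xb‖ ≤ ‖zt - zb‖ := by
      have := (withlp_norm_bounds (zt - zb)).1
      have e1 : (zt - zb).fst = x' - xb := by rw [← hx'eq]; rfl
      rwa [e1] at this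
    have h2 : c ≤ ρ := min_le_left _ _
    linarith [h2t ▸ hztzb, hc]
  · -- ‖u' - u‖
    have h1 : ‖p'.fst - p.fst‖ ≤ ‖p' - p‖ := by
      have := (withlp_norm_bounds (p' - p)).1
      rwa [show (p' - p).fst = p'.fst - p.fst from rfl] at this
    have e3 : p.fst = u := rfl
    rw [e3] at h1
    have : (2:ℝ)*δ' = ρ/2 + 4*δ := by rw [hδ'def]; ring
    linarith
  · -- ‖w' - w‖
    have h1 : ‖p'.snd - p.snd‖ ≤ ‖p' - p‖ := by
      have := (withlp_norm_bounds (p' - p)).2.1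
      rwa [show (p' - p).snd = p'.snd - p.snd from rfl] at this
    have e4 : p.snd = -w := rfl
    rw [e4] at h1
    have h2 : ‖-p'.snd - w‖ = ‖p'.snd - -w‖ := by rw [← norm_neg]; congr 1; abel
    rw [h2]
    have : (2:ℝ)*δ' = ρ/2 + 4*δ := by rw [hδ'def]; ring
    linarith
  · -- membership in fCoderiv
    intro ε hε
    have hx'xb : ‖x' - xb‖ < r' := by
      have h1 : ‖x' - xb‖ ≤ ‖zt - zb‖ := by
        have := (withlp_norm_bounds (zt - zb)).1
        rwa [show (zt - zb).fst = x' - xb by rw [← hx'eq]; rfl] at this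
      have h2 : c ≤ r'/2 := min_le_right _ _
      have := h2t ▸ hztzb
      linarith
    have hnb : closedBall xb r' ∈ nhds x' := by
      apply mem_of_superset (ball_mem_nhds x' (show (0:ℝ) < r' - ‖x' - xb‖ by linarith))
      intro y hy
      rw [mem_ball, dist_eq_norm] at hy
      rw [mem_closedBall, dist_eq_norm]
      calc ‖y - xb‖ ≤ ‖y - x'‖ + ‖x' - xb‖ := norm_sub_le_norm_sub_add_norm_sub y x' xb
        _ ≤ r' := by linarith
    have hcont : ContinuousAt f x' := hfr'.continuousAt hnb
    have hev1 : ∀ᶠ x in nhds x', ‖x - x'‖ < t*ε := by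
      have : ball x' (t*ε) ∈ nhds x' := ball_mem_nhds x' (by positivity)
      filter_upwards [this] with x hx
      rwa [mem_ball, dist_eq_norm] at hx
    have hev2 : ∀ᶠ x in nhds x', ‖f x - f x'‖ < t*ε := by
      have : ball (f x') (t*ε) ∈ nhds (f x') := ball_mem_nhds _ (by positivity)
      filter_upwards [hcont.eventually_mem this] with x hx
      rwa [mem_ball, dist_eq_norm] at hx
    filter_upwards [hnb, hev1, hev2] with x hx1 hx2 hx3
    have hzK : ι (x, f x) ∈ K := ⟨x, hx1, rfl⟩
    have hproxx := hprox _ hzK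
    have hfx' : f x' = ((WithLp.equiv 2 (E × F)) zt).snd := by rw [← hx'eq]; rfl
    have e1 : (ι (x, f x) - zt).fst = x - x' := by rw [← hx'eq]; rfl
    have e2 : (ι (x, f x) - zt).snd = f x - f x' := by rw [← hx'eq]; rfl
    have hin : ⟪p', ι (x, f x) - zt⟫ = ⟪p'.fst, x - x'⟫ + ⟪p'.snd, f x - f x'⟫ := by
      rw [WithLp.prod_inner_apply]
      exact congrArg₂ (· + ·) (congrArg (inner ℝ p'.fst) e1) (congrArg (inner ℝ p'.snd) e2)
    have hsc : ⟪p', ι (x, f x) - zt⟫ = t⁻¹ * ⟪q, ι (x, f x) - zt⟫ := by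
      rw [hp', real_inner_smul_left]
    have hnz : ‖ι (x, f x) - zt‖ ≤ ‖x - x'‖ + ‖f x - f x'‖ := by
      have := (withlp_norm_bounds (ι (x, f x) - zt)).2.2.1
      rwa [e1, e2] at this
    have hgoal : ⟪p'.fst, x - x'⟫ + ⟪p'.snd, f x - f x'⟫ ≤ ε * (‖x - x'‖ + ‖f x - f x'‖) := by
      rw [← hin, hsc]
      have h1 : t⁻¹ * ⟪q, ι (x, f x) - zt⟫ ≤ t⁻¹ * (‖ι (x, f x) - zt‖^2 / 2) :=
        mul_le_mul_of_nonneg_left hproxx (by positivity)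
      have h2 : ‖ι (x, f x) - zt‖^2 ≤ (‖x - x'‖ + ‖f x - f x'‖) * (2*t*ε) := by
        have hnn : (0:ℝ) ≤ ‖ι (x, f x) - zt‖ := norm_nonneg _
        nlinarith [norm_nonneg (x - x'), norm_nonneg (f x - f x')]
      have h3 : t⁻¹ * (‖ι (x, f x) - zt‖^2 / 2) ≤ t⁻¹ * ((‖x - x'‖ + ‖f x - f x'‖) * (2*t*ε) / 2) := by
        apply mul_le_mul_of_nonneg_left _ (by positivity)
        linarith
      calc t⁻¹ * ⟪q, ι (x, f x) - zt⟫ ≤ t⁻¹ * ((‖x - x'‖ + ‖f x - f x'‖) * (2*t*ε) / 2) :=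
            le_trans h1 h3
        _ = ε * (‖x - x'‖ + ‖f x - f x'‖) := by field_simp
    have hfinal : ⟪p'.fst, x - x'⟫ - ⟪-p'.snd, f x - f x'⟫ = ⟪p'.fst, x - x'⟫ + ⟪p'.snd, f x - f x'⟫ := by
      rw [inner_neg_left]; ring
    rw [hfinal]
    exact hgoal

lemma zero_mem_fCoderiv {E F : Type*} [NormedAddCommGroup E] [InnerProductSpace ℝ E]
    [NormedAddCommGroup F] [InnerProductSpace ℝ F] (f : E → F) (x : E) :
    (0 : E) ∈ fCoderiv f x (0 : F) := by
  intro ε hε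
  filter_upwards with y
  rw [inner_zero_left, inner_zero_left]
  have h : (0:ℝ) ≤ ε * (‖y - x‖ + ‖f y - f x‖) := by positivity
  linarith

lemma fCoderiv_comp_subset {dd nn mm : ℕ}
    (S : EuclideanSpace ℝ (Fin dd) → EuclideanSpace ℝ (Fin nn))
    (A : EuclideanSpace ℝ (Fin nn) →L[ℝ] EuclideanSpace ℝ (Fin mm))
    (x : EuclideanSpace ℝ (Fin dd)) (v : EuclideanSpace ℝ (Fin mm))
    (u : EuclideanSpace ℝ (Fin dd)) (h : u ∈ fCoderiv (fun y => A (S y)) x v) :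
    u ∈ fCoderiv S x (ContinuousLinearMap.adjoint A v) := by
  intro ε hε
  have hA : (0:ℝ) < 1 + ‖A‖ := by positivity
  filter_upwards [h (ε / (1 + ‖A‖)) (by positivity)] with y hy
  have h1 : ⟪ContinuousLinearMap.adjoint A v, S y - S x⟫ = ⟪v, A (S y) - A (S x)⟫ := by
    rw [ContinuousLinearMap.adjoint_inner_left, map_sub]
  have h2 : ‖A (S y) - A (S x)‖ ≤ ‖A‖ * ‖S y - S x‖ := by
    rw [← map_sub]; exact A.le_opNorm _
  have h3 : (0:ℝ) ≤ ‖y - x‖ := norm_nonneg _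
  have h4 : (0:ℝ) ≤ ‖S y - S x‖ := norm_nonneg _
  have h5 : (0:ℝ) ≤ ‖A (S y) - A (S x)‖ := norm_nonneg _
  rw [h1]
  have key : ε / (1 + ‖A‖) * (‖y - x‖ + ‖A (S y) - A (S x)‖) ≤ ε * (‖y - x‖ + ‖S y - S x‖) := by
    rw [div_mul_eq_mul_div, div_le_iff₀ hA]
    nlinarith [norm_nonneg A, mul_nonneg hε.le h3, mul_nonneg hε.le h4,
      mul_nonneg (mul_nonneg hε.le (norm_nonneg A)) h3,
      mul_le_mul_of_nonneg_left h2 hε.le]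
  linarith

/-- Limiting coderivative of the composition of a locally Lipschitz map with a
linear map: `D*(A ∘ S)(x̄)(v) = D*S(x̄)(A* v)`. -/
theorem stmt_8 {dd nn mm : ℕ}
    (S : EuclideanSpace ℝ (Fin dd) → EuclideanSpace ℝ (Fin nn))
    (A : EuclideanSpace ℝ (Fin nn) →L[ℝ] EuclideanSpace ℝ (Fin mm))
    (xb : EuclideanSpace ℝ (Fin dd)) (L : NNReal)
    (U : Set (EuclideanSpace ℝ (Fin dd))) (hU : U ∈ nhds xb)
    (hS : LipschitzOnWith L S U) :
    ∀ v : EuclideanSpace ℝ (Fin mm),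
      lCoderiv (fun x => A (S x)) xb v = lCoderiv S xb (ContinuousLinearMap.adjoint A v) := by
  intro v
  ext u
  constructor
  · rintro ⟨xs, vs, us, hxs, hvs, hus, hmem⟩
    exact ⟨xs, fun k => ContinuousLinearMap.adjoint A (vs k), us, hxs,
      ((ContinuousLinearMap.adjoint A).continuous.tendsto v).comp hvs, hus,
      fun k => fCoderiv_comp_subset S A _ _ _ (hmem k)⟩
  · rintro ⟨xs, ws, us, hxs, hws, hus, hmem⟩
    obtain ⟨R, hR, hRU⟩ := Metric.mem_nhds_iff.mp hU
    set r := R/3 with hrdef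
    have hr : 0 < r := by positivity
    have hball2 : closedBall xb (2*r) ⊆ U := fun y hy => hRU (by
      rw [mem_ball]; rw [mem_closedBall] at hy; rw [hrdef] at hy; linarith)
    set Av := ContinuousLinearMap.adjoint A v with hAv
    set δk : ℕ → ℝ := fun k => (L:ℝ) * ‖ws k - Av‖ with hδk
    have hδknn : ∀ k, 0 ≤ δk k := fun k => mul_nonneg L.coe_nonneg (norm_nonneg _)
    have key : ∀ k, ∃ x' u' v', u' ∈ fCoderiv (fun x => A (S x)) x' v' ∧
        (dist (xs k) xb < r → ‖x' - xs k‖ < 1/((k:ℝ)+1) ∧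
          ‖u' - us k‖ ≤ 4*(δk k) + 1/((k:ℝ)+1) ∧ ‖v' - v‖ ≤ 4*(δk k) + 1/((k:ℝ)+1)) := by
      intro k
      by_cases hk : dist (xs k) xb < r
      · have hsub : closedBall (xs k) r ⊆ U := by
          intro y hy
          apply hball2
          rw [mem_closedBall] at hy ⊢
          calc dist y xb ≤ dist y (xs k) + dist (xs k) xb := dist_triangle _ _ _
            _ ≤ 2*r := by linarith
        have hskU : xs k ∈ U := hsub (mem_closedBall_self hr.le)
        have hcont : ContinuousOn (fun x => A (S x)) (closedBall (xs k) r) :=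
          A.continuous.comp_continuousOn ((hS.continuousOn).mono hsub)
        have hkpos : (0:ℝ) < 1/((k:ℝ)+1) := by positivity
        have H : ∀ ε > 0, ∀ᶠ x in nhds (xs k),
            ⟪us k, x - xs k⟫ - ⟪v, A (S x) - A (S (xs k))⟫ ≤
              (ε + δk k) * (‖x - xs k‖ + ‖A (S x) - A (S (xs k))‖) := by
          intro ε hε
          have hL1 : (0:ℝ) < 1 + (L:ℝ) := by positivity
          filter_upwards [hmem k (ε/(1+(L:ℝ))) (by positivity), ball_mem_nhds (xs k) hr]
            with x hx1 hx2
          have hxU : x ∈ U := hsub (ball_subset_closedBall hx2)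
          have hLip : ‖S x - S (xs k)‖ ≤ (L:ℝ) * ‖x - xs k‖ := by
            rw [← dist_eq_norm, ← dist_eq_norm]
            exact hS.dist_le_mul x hxU (xs k) hskU
          have h1 : ⟪v, A (S x) - A (S (xs k))⟫ = ⟪Av, S x - S (xs k)⟫ := by
            rw [hAv, ContinuousLinearMap.adjoint_inner_left, map_sub]
          have h2 : ⟪Av, S x - S (xs k)⟫
              = ⟪ws k, S x - S (xs k)⟫ - ⟪ws k - Av, S x - S (xs k)⟫ := by
            rw [inner_sub_left]; ring
          have h3 : ⟪ws k - Av, S x - S (xs k)⟫ ≤ ‖ws k - Av‖ * ‖S x - S (xs k)‖ :=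
            real_inner_le_norm _ _
          have hnn1 : (0:ℝ) ≤ ‖x - xs k‖ := norm_nonneg _
          have hnn2 : (0:ℝ) ≤ ‖S x - S (xs k)‖ := norm_nonneg _
          have hnn3 : (0:ℝ) ≤ ‖A (S x) - A (S (xs k))‖ := norm_nonneg _
          have hnn4 : (0:ℝ) ≤ ‖ws k - Av‖ := norm_nonneg _
          rw [h1, h2]
          have hx1' : ⟪us k, x - xs k⟫ - ⟪ws k, S x - S (xs k)⟫
              ≤ ε/(1+(L:ℝ)) * (‖x - xs k‖ + ‖S x - S (xs k)‖) := hx1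
          have hstep : ε/(1+(L:ℝ)) * (‖x - xs k‖ + ‖S x - S (xs k)‖) ≤ ε * ‖x - xs k‖ := by
            rw [div_mul_eq_mul_div, div_le_iff₀ hL1]
            nlinarith [mul_le_mul_of_nonneg_left hLip hε.le]
          have hrest : ‖ws k - Av‖ * ‖S x - S (xs k)‖ ≤ δk k * ‖x - xs k‖ := by
            rw [hδk]
            calc ‖ws k - Av‖ * ‖S x - S (xs k)‖
                ≤ ‖ws k - Av‖ * ((L:ℝ) * ‖x - xs k‖) := mul_le_mul_of_nonneg_left hLip hnn4
              _ = (L:ℝ) * ‖ws k - Av‖ * ‖x - xs k‖ := by ring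
          nlinarith [mul_nonneg (hδknn k) hnn3, mul_nonneg hε.le hnn3]
        obtain ⟨x', u', v', h1, h2, h3, h4⟩ :=
          removal (fun x => A (S x)) (xs k) r (δk k) (1/((k:ℝ)+1))
            hr (hδknn k) hkpos hcont (us k) v H
        exact ⟨x', u', v', h4, fun _ => ⟨h1, h2, h3⟩⟩
      · exact ⟨xb, 0, 0, zero_mem_fCoderiv _ _, fun h => absurd h hk⟩
    choose x' u' v' hmem' hclose using key
    have hev : ∀ᶠ k in atTop, dist (xs k) xb < r := by
      filter_upwards [hxs (ball_mem_nhds xb hr)] with k hk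
      exact hk
    have hδk0 : Tendsto δk atTop (nhds 0) := by
      have h1 : Tendsto (fun k => ‖ws k - Av‖) atTop (nhds 0) := by
        have := (hws.sub (tendsto_const_nhds : Tendsto (fun _ : ℕ => Av) atTop _)).norm
        simpa using this
      have := h1.const_mul (L:ℝ)
      simpa using this
    have hone : Tendsto (fun k : ℕ => 1/((k:ℝ)+1)) atTop (nhds 0) :=
      tendsto_one_div_add_atTop_nhds_zero_nat
    have hb0 : Tendsto (fun k => 4*(δk k) + 1/((k:ℝ)+1)) atTop (nhds 0) := by
      have h1 := hδk0.const_mul (4:ℝ)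
      simpa using h1.add hone
    refine ⟨x', v', u', ?_, ?_, ?_, hmem'⟩
    · rw [tendsto_iff_dist_tendsto_zero]
      have hub : ∀ᶠ k in atTop,
          dist (x' k) xb ≤ 1/((k:ℝ)+1) + dist (xs k) xb := by
        filter_upwards [hev] with k hk
        have h1 := (hclose k hk).1
        calc dist (x' k) xb ≤ dist (x' k) (xs k) + dist (xs k) xb := dist_triangle _ _ _
          _ ≤ 1/((k:ℝ)+1) + dist (xs k) xb := by
              rw [dist_eq_norm]; exact add_le_add_left h1.le _
      have hg : Tendsto (fun k : ℕ => 1/((k:ℝ)+1) + dist (xs k) xb) atTop (nhds 0) := by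
        have h3 : Tendsto (fun k => dist (xs k) xb) atTop (nhds 0) :=
          tendsto_iff_dist_tendsto_zero.mp hxs
        simpa using hone.add h3
      exact squeeze_zero' (Eventually.of_forall fun k => dist_nonneg) hub hg
    · rw [tendsto_iff_dist_tendsto_zero]
      have hub : ∀ᶠ k in atTop,
          dist (v' k) v ≤ 4*(δk k) + 1/((k:ℝ)+1) := by
        filter_upwards [hev] with k hk
        rw [dist_eq_norm]
        exact (hclose k hk).2.2
      exact squeeze_zero' (Eventually.of_forall fun k => dist_nonneg) hub hb0
    · rw [tendsto_iff_dist_tendsto_zero]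
      have hub : ∀ᶠ k in atTop,
          dist (u' k) u ≤ (4*(δk k) + 1/((k:ℝ)+1)) + dist (us k) u := by
        filter_upwards [hev] with k hk
        have h1 := (hclose k hk).2.1
        calc dist (u' k) u ≤ dist (u' k) (us k) + dist (us k) u := dist_triangle _ _ _
          _ ≤ (4*(δk k) + 1/((k:ℝ)+1)) + dist (us k) u := by
              rw [dist_eq_norm]; exact add_le_add_left h1 _
      have hg : Tendsto (fun k : ℕ => (4*(δk k) + 1/((k:ℝ)+1)) + dist (us k) u) atTop (nhds 0) := by
        have h3 : Tendsto (fun k => dist (us k) u) atTop (nhds 0) :=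
          tendsto_iff_dist_tendsto_zero.mp hus
        simpa using hb0.add h3
      exact squeeze_zero' (Eventually.of_forall fun k => dist_nonneg) hub hg
end

section
/- Let S : ℝ^m → ℝ^q be continuous and B(x) = Ax + b an affine map from ℝⁿ to ℝ^m with A linear. Then A* Ď*S(A x̄ + b)(v) ⊆ Ď*(S ∘ B)(x̄)(v) for every v ∈ ℝ^q, where Ď* denotes the regular (Fréchet) coderivative and A* the adjoint of A. -/
open Filter Topology
open scoped RealInnerProductSpace

/-- Regular coderivative inclusion for the pre-composition of a continuous map
with an affine map: `A* D̂*S(A x̄ + b)(v) ⊆ D̂*(S ∘ B)(x̄)(v)` for `B x = A x + b`. -/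
theorem stmt_10 {nn mm qq : ℕ}
    (S : EuclideanSpace ℝ (Fin mm) → EuclideanSpace ℝ (Fin qq))
    (hS : Continuous S)
    (A : EuclideanSpace ℝ (Fin nn) →L[ℝ] EuclideanSpace ℝ (Fin mm))
    (b : EuclideanSpace ℝ (Fin mm))
    (xb : EuclideanSpace ℝ (Fin nn)) :
    ∀ v : EuclideanSpace ℝ (Fin qq),
      (ContinuousLinearMap.adjoint A) '' (fCoderiv S (A xb + b) v) ⊆
        fCoderiv (fun x => S (A x + b)) xb v := by
  intro v w hw
  rcases hw with ⟨u, hu, rfl⟩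
  intro ε hε
  have hC : (0:ℝ) < ‖A‖ + 1 := by positivity
  have hε' : (0:ℝ) < ε / (‖A‖ + 1) := div_pos hε hC
  have hB : Continuous fun x : EuclideanSpace ℝ (Fin nn) => A x + b :=
    (A.continuous).add continuous_const
  have h2 := (hB.tendsto xb).eventually (hu (ε / (‖A‖ + 1)) hε')
  filter_upwards [h2] with x hx
  have hAx : A x + b - (A xb + b) = A (x - xb) := by
    rw [map_sub]; abel
  rw [hAx] at hx
  have key : ⟪(ContinuousLinearMap.adjoint A) u, x - xb⟫ = ⟪u, A (x - xb)⟫ :=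
    ContinuousLinearMap.adjoint_inner_left A (x - xb) u
  rw [key]
  refine hx.trans ?_
  have hnorm : ‖A (x - xb)‖ ≤ ‖A‖ * ‖x - xb‖ := A.le_opNorm _
  have h1 : ε / (‖A‖ + 1) ≤ ε := by
    rw [div_le_iff₀ hC]
    nlinarith [norm_nonneg A]
  have hε'nn := hε'.le
  have hS1 : (0:ℝ) ≤ ‖S (A x + b) - S (A xb + b)‖ := norm_nonneg _
  have hx1 : (0:ℝ) ≤ ‖x - xb‖ := norm_nonneg _
  have : ε / (‖A‖ + 1) * ‖A (x - xb)‖ ≤ ε * ‖x - xb‖ := by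
    calc ε / (‖A‖ + 1) * ‖A (x - xb)‖ ≤ ε / (‖A‖ + 1) * (‖A‖ * ‖x - xb‖) := by
          exact mul_le_mul_of_nonneg_left hnorm hε'nn
      _ ≤ ε / (‖A‖ + 1) * ((‖A‖ + 1) * ‖x - xb‖) := by
          have : ‖A‖ * ‖x - xb‖ ≤ (‖A‖ + 1) * ‖x - xb‖ := by nlinarith
          exact mul_le_mul_of_nonneg_left this hε'nn
      _ = ε * ‖x - xb‖ := by field_simp
  nlinarith [mul_le_mul_of_nonneg_right h1 hS1]
end

section
/- Let f(x) = (1/2)⟨Ax, x⟩ + ⟨b, x⟩ with A symmetric positive-semidefinite, let g : ℝⁿ → (−∞, ∞] be proper lsc convex, and let γ > 0 with I − γA positive-definite. Define the forward-backward envelope φ_γ(x) = inf_y { f(x) + ⟨∇f(x), y − x⟩ + g(y) + (1/(2γ))‖y − x‖² }. Then φ_γ is differentiable with ∇φ_γ(x) = γ⁻¹(I − γA)(x − Prox_{γg}(x − γ∇f(x))). In particular, x̄ is a stationary point of φ_γ (∇φ_γ(x̄) = 0) if and only if x̄ = Prox_{γg}(x̄ − γ∇f(x̄)), i.e., if and only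 if 0 ∈ ∇f(x̄) + ∂g(x̄). -/
open Filter Topology
open scoped RealInnerProductSpace

section Aux

variable {F : Type*} [NormedAddCommGroup F] [InnerProductSpace ℝ F]

/-- Variational inequality for the prox point, real form. -/
private lemma aux_vi (g : F → EReal)
    (hconv : ∀ x y : F, ∀ t : ℝ, 0 ≤ t → t ≤ 1 →
      g (t • x + (1 - t) • y) ≤ (t : EReal) * g x + ((1 - t : ℝ) : EReal) * g y)
    (γ : ℝ) (hγ : 0 < γ) (p u : F)
    (hprox : ∀ y, g p + (((1 / (2 * γ)) * ‖p - u‖ ^ 2 : ℝ) : EReal) ≤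
      g y + (((1 / (2 * γ)) * ‖y - u‖ ^ 2 : ℝ) : EReal))
    (y : F) (gp gy : ℝ) (hgp : g p = (gp : EReal)) (hgy : g y = (gy : EReal)) :
    gp + γ⁻¹ * ⟪u - p, y - p⟫ ≤ gy := by
  set c : ℝ := 1 / (2 * γ) with hc
  have hcpos : 0 < c := by positivity
  have h2c : γ⁻¹ = 2 * c := by rw [hc]; field_simp
  set I : ℝ := ⟪u - p, y - p⟫ with hI
  set N : ℝ := ‖y - p‖ ^ 2 with hN
  have hNnn : 0 ≤ N := by positivity
  have hkey : ∀ t : ℝ, 0 < t → t ≤ 1 → gp + γ⁻¹ * I ≤ gy + t * (c * N) := by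
    intro t ht ht1
    have h1 := hprox (t • y + (1 - t) • p)
    have h2 := hconv y p t ht.le ht1
    have h3 : g p + ((c * ‖p - u‖ ^ 2 : ℝ) : EReal) ≤
        ((t : EReal) * g y + ((1 - t : ℝ) : EReal) * g p)
          + ((c * ‖t • y + (1 - t) • p - u‖ ^ 2 : ℝ) : EReal) :=
      le_trans h1 (add_le_add_left h2 _)
    rw [hgp, hgy, ← EReal.coe_mul, ← EReal.coe_mul, ← EReal.coe_add, ← EReal.coe_add,
      ← EReal.coe_add, EReal.coe_le_coe_iff] at h3
    have hvec : t • y + (1 - t) • p - u = (p - u) + t • (y - p) := by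
      simp only [sub_smul, one_smul, smul_sub]; abel
    have hnorm : ‖t • y + (1 - t) • p - u‖ ^ 2
        = ‖p - u‖ ^ 2 + 2 * (t * ⟪p - u, y - p⟫) + t ^ 2 * N := by
      rw [hvec, norm_add_sq_real, real_inner_smul_right, norm_smul,
        Real.norm_eq_abs, abs_of_pos ht, hN, mul_pow]
    have hin : ⟪p - u, y - p⟫ = -I := by
      rw [hI, ← neg_sub u p, inner_neg_left]
    rw [hnorm, hin] at h3
    have h5 : t * (gp + γ⁻¹ * I) ≤ t * (gy + t * (c * N)) := by
      rw [h2c]; nlinarith [h3]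
    exact (mul_le_mul_iff_right₀ ht).mp h5
  refine le_of_forall_pos_le_add ?_
  intro ε hε
  set s : ℝ := ε / (c * N + 1) with hs
  have hspos : 0 < s := by positivity
  have hseq : s * (c * N + 1) = ε := by
    rw [hs]; field_simp
  have ht : 0 < min 1 s := lt_min one_pos hspos
  have h := hkey (min 1 s) ht (min_le_left _ _)
  have hts : min 1 s ≤ s := min_le_right _ _
  have : min 1 s * (c * N) ≤ ε := by
    nlinarith [mul_le_mul_of_nonneg_right hts (by positivity : (0:ℝ) ≤ c * N)]
  linarith

/-- Quadratic expansion identity for the partial envelope function. -/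
private lemma aux_quad (A : F →L[ℝ] F) (b : F) (hsym : ∀ x y : F, ⟪A x, y⟫ = ⟪x, A y⟫)
    (γ : ℝ) (hγ : 0 < γ) (f : F → ℝ)
    (hf : ∀ x, f x = (1 / 2) * ⟪A x, x⟫ + ⟪b, x⟫) (x x' y : F) :
    (f x' + ⟪A x' + b, y - x'⟫ + (1 / (2 * γ)) * ‖y - x'‖ ^ 2)
      - (f x + ⟪A x + b, y - x⟫ + (1 / (2 * γ)) * ‖y - x‖ ^ 2)
    = ⟪γ⁻¹ • ((x - y) - γ • A (x - y)), x' - x⟫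
      + ((1 / (2 * γ)) * ‖x' - x‖ ^ 2 - (1 / 2) * ⟪A (x' - x), x' - x⟫) := by
  have hγ' : γ ≠ 0 := ne_of_gt hγ
  have e1 : ⟪A x, x'⟫ = ⟪A x', x⟫ := by rw [hsym]; exact real_inner_comm _ _
  have e2 : ⟪A x, y⟫ = ⟪A y, x⟫ := by rw [hsym]; exact real_inner_comm _ _
  have e3 : ⟪A x', y⟫ = ⟪A y, x'⟫ := by rw [hsym]; exact real_inner_comm _ _
  have s1 : ⟪x', y⟫ = ⟪y, x'⟫ := real_inner_comm _ _
  have s2 : ⟪y, x⟫ = ⟪x, y⟫ := real_inner_comm _ _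
  have s3 : ⟪x, x'⟫ = ⟪x', x⟫ := real_inner_comm _ _
  simp only [hf, map_sub, map_add, inner_sub_left, inner_sub_right,
    inner_add_left, inner_add_right, real_inner_smul_left, real_inner_smul_right,
    ← real_inner_self_eq_norm_sq, smul_sub]
  have hγγ : γ * γ⁻¹ = 1 := mul_inv_cancel₀ hγ'
  linear_combination e3 - e2 + (1/2) * e1 + (1/(2*γ)) * s1 - (1/(2*γ)) * s2
    - (1/(2*γ)) * s3 - γ⁻¹ * s1
    + (⟪A x, x'⟫ - ⟪A x, x⟫ - ⟪A y, x'⟫ + ⟪A y, x⟫ : ℝ) * hγγ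

/-- Completing the square. -/
private lemma aux_sq (γ : ℝ) (hγ : 0 < γ) (v x y : F) :
    ⟪v, y - x⟫ + (1 / (2 * γ)) * ‖y - x‖ ^ 2
      = (1 / (2 * γ)) * ‖y - (x - γ • v)‖ ^ 2 - (γ / 2) * ‖v‖ ^ 2 := by
  have hγ' : γ ≠ 0 := ne_of_gt hγ
  have hv : y - (x - γ • v) = (y - x) + γ • v := by abel
  rw [hv, norm_add_sq_real, real_inner_smul_right, norm_smul, Real.norm_eq_abs,
    abs_of_pos hγ, real_inner_comm (y - x) v, mul_pow]
  field_simp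
  ring

end Aux

set_option maxHeartbeats 1600000 in
/-- Gradient of the forward-backward envelope of a convex quadratic-plus-convex
composite function, and characterization of its stationary points. -/
theorem stmt_12 {n : ℕ}
    (A : EuclideanSpace ℝ (Fin n) →L[ℝ] EuclideanSpace ℝ (Fin n))
    (b : EuclideanSpace ℝ (Fin n))
    (hsym : ∀ x y, ⟪A x, y⟫ = ⟪x, A y⟫)
    (hpsd : ∀ x, 0 ≤ ⟪A x, x⟫)
    (g : EuclideanSpace ℝ (Fin n) → EReal)
    (hproper : ∃ x, g x ≠ ⊤) (hnotbot : ∀ x, g x ≠ ⊥)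
    (hlsc : LowerSemicontinuous g)
    (hconv : ∀ x y : EuclideanSpace ℝ (Fin n), ∀ t : ℝ, 0 ≤ t → t ≤ 1 →
      g (t • x + (1 - t) • y) ≤ (t : EReal) * g x + ((1 - t : ℝ) : EReal) * g y)
    (γ : ℝ) (hγ : 0 < γ)
    (hposdef : ∀ x : EuclideanSpace ℝ (Fin n), x ≠ 0 → 0 < ⟪x - γ • A x, x⟫)
    (f : EuclideanSpace ℝ (Fin n) → ℝ)
    (hf : ∀ x, f x = (1 / 2) * ⟪A x, x⟫ + ⟪b, x⟫)
    (prox : EuclideanSpace ℝ (Fin n) → EuclideanSpace ℝ (Fin n))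
    (hprox : ∀ x y, g (prox x) + (((1 / (2 * γ)) * ‖prox x - x‖ ^ 2 : ℝ) : EReal) ≤
      g y + (((1 / (2 * γ)) * ‖y - x‖ ^ 2 : ℝ) : EReal))
    (φγ : EuclideanSpace ℝ (Fin n) → ℝ)
    (hφγ : ∀ x, (φγ x : EReal) =
      ⨅ y : EuclideanSpace ℝ (Fin n),
        (((f x + ⟪A x + b, y - x⟫ + (1 / (2 * γ)) * ‖y - x‖ ^ 2 : ℝ) : EReal) + g y)) :
    (∀ x, HasGradientAt φγ
      (γ⁻¹ • ((x - prox (x - γ • (A x + b))) -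
        γ • A (x - prox (x - γ • (A x + b))))) x) ∧
    (∀ xb : EuclideanSpace ℝ (Fin n),
      ((γ⁻¹ • ((xb - prox (xb - γ • (A xb + b))) -
          γ • A (xb - prox (xb - γ • (A xb + b))))) = 0 ↔
        xb = prox (xb - γ • (A xb + b))) ∧
      ((γ⁻¹ • ((xb - prox (xb - γ • (A xb + b))) -
          γ • A (xb - prox (xb - γ • (A xb + b))))) = 0 ↔
        ∀ y, g xb + ((⟪-(A xb + b), y - xb⟫ : ℝ) : EReal) ≤ g y)) := by
  have hγ' : γ ≠ 0 := ne_of_gt hγ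
  obtain ⟨y₀, hy₀⟩ := hproper
  obtain ⟨r₀, hr₀⟩ : ∃ r : ℝ, g y₀ = (r : EReal) :=
    ⟨(g y₀).toReal, (EReal.coe_toReal hy₀ (hnotbot y₀)).symm⟩
  -- g is finite at prox points
  have hptop : ∀ u, g (prox u) ≠ ⊤ := by
    intro u htop
    have h := hprox u y₀
    rw [htop, hr₀, EReal.top_add_coe, ← EReal.coe_add] at h
    exact (EReal.coe_lt_top _).not_ge h
  have hpfin : ∀ u, g (prox u) = (((g (prox u)).toReal : ℝ) : EReal) :=
    fun u => (EReal.coe_toReal (hptop u) (hnotbot _)).symm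
  -- variational inequality, real form
  have hVI : ∀ u y (gy : ℝ), g y = (gy : EReal) →
      (g (prox u)).toReal + γ⁻¹ * ⟪u - prox u, y - prox u⟫ ≤ gy := by
    intro u y gy hgy
    exact aux_vi g hconv γ hγ (prox u) u (fun y => hprox u y) y _ gy (hpfin u) hgy
  -- variational inequality, EReal form
  have hVIE : ∀ u y,
      (((g (prox u)).toReal + γ⁻¹ * ⟪u - prox u, y - prox u⟫ : ℝ) : EReal) ≤ g y := by
    intro u y
    by_cases hy : g y = ⊤
    · rw [hy]; exact le_top
    · obtain ⟨gy, hgy⟩ : ∃ r : ℝ, g y = (r : EReal) :=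
        ⟨(g y).toReal, (EReal.coe_toReal hy (hnotbot y)).symm⟩
      rw [hgy, EReal.coe_le_coe_iff]
      exact hVI u y gy hgy
  -- nonexpansiveness of prox
  have hne : ∀ u v, ‖prox u - prox v‖ ≤ ‖u - v‖ := by
    intro u v
    have h1 := hVI u (prox v) _ (hpfin v)
    have h2 := hVI v (prox u) _ (hpfin u)
    have hmul : γ⁻¹ * (⟪u - prox u, prox v - prox u⟫ + ⟪v - prox v, prox u - prox v⟫)
        ≤ 0 := by nlinarith [h1, h2]
    have hx : ⟪u - prox u, prox v - prox u⟫ + ⟪v - prox v, prox u - prox v⟫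
        = ‖prox u - prox v‖ ^ 2 - ⟪u - v, prox u - prox v⟫ := by
      have e1 : ⟪u - prox u, prox v - prox u⟫ = -⟪u - prox u, prox u - prox v⟫ := by
        rw [← neg_sub (prox u) (prox v), inner_neg_right]
      rw [e1, ← real_inner_self_eq_norm_sq]
      simp only [inner_sub_left, inner_sub_right]
      ring
    rw [hx] at hmul
    have h6 := mul_le_mul_of_nonneg_left hmul hγ.le
    rw [mul_zero, ← mul_assoc, mul_inv_cancel₀ hγ', one_mul] at h6
    have hcs := real_inner_le_norm (u - v) (prox u - prox v)
    nlinarith [norm_nonneg (prox u - prox v), norm_nonneg (u - v)]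
  -- value of the envelope
  have hφval : ∀ x, φγ x
      = f x + ⟪A x + b, prox (x - γ • (A x + b)) - x⟫
        + (1 / (2 * γ)) * ‖prox (x - γ • (A x + b)) - x‖ ^ 2
        + (g (prox (x - γ • (A x + b)))).toReal := by
    intro x
    have hle : (φγ x : EReal)
        ≤ ((f x + ⟪A x + b, prox (x - γ • (A x + b)) - x⟫
            + (1 / (2 * γ)) * ‖prox (x - γ • (A x + b)) - x‖ ^ 2
            + (g (prox (x - γ • (A x + b)))).toReal : ℝ) : EReal) := by
      rw [hφγ x]
      refine le_trans (iInf_le _ (prox (x - γ • (A x + b)))) ?_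
      rw [hpfin (x - γ • (A x + b))]
      norm_cast
    have hge : ((f x + ⟪A x + b, prox (x - γ • (A x + b)) - x⟫
            + (1 / (2 * γ)) * ‖prox (x - γ • (A x + b)) - x‖ ^ 2
            + (g (prox (x - γ • (A x + b)))).toReal : ℝ) : EReal)
        ≤ (φγ x : EReal) := by
      rw [hφγ x]
      refine le_iInf fun y => ?_
      have hkey := hprox (x - γ • (A x + b)) y
      have hCp := aux_sq γ hγ (A x + b) x (prox (x - γ • (A x + b)))
      have hCy := aux_sq γ hγ (A x + b) x y
      calc ((f x + ⟪A x + b, prox (x - γ • (A x + b)) - x⟫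
            + (1 / (2 * γ)) * ‖prox (x - γ • (A x + b)) - x‖ ^ 2
            + (g (prox (x - γ • (A x + b)))).toReal : ℝ) : EReal)
          = ((f x - (γ / 2) * ‖A x + b‖ ^ 2 : ℝ) : EReal)
            + (g (prox (x - γ • (A x + b)))
              + (((1 / (2 * γ)) * ‖prox (x - γ • (A x + b)) - (x - γ • (A x + b))‖ ^ 2 : ℝ)
                : EReal)) := by
            rw [hpfin (x - γ • (A x + b))]
            norm_cast
            all_goals simp only [EReal.toReal_coe]
            all_goals linarith [hCp]
        _ ≤ ((f x - (γ / 2) * ‖A x + b‖ ^ 2 : ℝ) : EReal)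
            + (g y + (((1 / (2 * γ)) * ‖y - (x - γ • (A x + b))‖ ^ 2 : ℝ) : EReal)) :=
            add_le_add_right hkey _
        _ = ((f x + ⟪A x + b, y - x⟫ + (1 / (2 * γ)) * ‖y - x‖ ^ 2 : ℝ) : EReal) + g y := by
            by_cases hy : g y = ⊤
            · rw [hy, EReal.top_add_coe, EReal.coe_add_top, EReal.coe_add_top]
            · obtain ⟨gy, hgy⟩ : ∃ r : ℝ, g y = (r : EReal) :=
                ⟨(g y).toReal, (EReal.coe_toReal hy (hnotbot y)).symm⟩
              rw [hgy]
              norm_cast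
              all_goals linarith [hCy]
    have := le_antisymm hle hge
    exact_mod_cast this
  -- upper envelope bound, real form
  have hupR : ∀ x x',
      φγ x ≤ f x + ⟪A x + b, prox (x' - γ • (A x' + b)) - x⟫
        + (1 / (2 * γ)) * ‖prox (x' - γ • (A x' + b)) - x‖ ^ 2
        + (g (prox (x' - γ • (A x' + b)))).toReal := by
    intro x x'
    have h : (φγ x : EReal) ≤ _ := (hφγ x) ▸ iInf_le _ (prox (x' - γ • (A x' + b)))
    rw [hpfin (x' - γ • (A x' + b))] at h
    exact_mod_cast h
  -- the gradient statement
  have hgrad : ∀ x, HasGradientAt φγ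
      (γ⁻¹ • ((x - prox (x - γ • (A x + b))) -
        γ • A (x - prox (x - γ • (A x + b))))) x := by
    intro x
    rw [hasGradientAt_iff_isLittleO]
    set CC : ℝ := (1 / (2 * γ)) + ‖A‖ / 2 + (γ⁻¹ + ‖A‖) * (1 + γ * ‖A‖) with hCC
    have hCCpos : 0 < CC := by positivity
    have hbound : ∀ x', |φγ x' - φγ x
        - ⟪γ⁻¹ • ((x - prox (x - γ • (A x + b))) -
            γ • A (x - prox (x - γ • (A x + b)))), x' - x⟫|
        ≤ CC * ‖x' - x‖ ^ 2 := by
      intro x'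
      have h1 := hupR x' x
      have h2 := hφval x
      have h3 := hupR x x'
      have h4 := hφval x'
      have hq := aux_quad A b hsym γ hγ f hf x x' (prox (x - γ • (A x + b)))
      have hq' := aux_quad A b hsym γ hγ f hf x x' (prox (x' - γ • (A x' + b)))
      set q : EuclideanSpace ℝ (Fin n) := prox (x - γ • (A x + b)) with hqd
      set q' : EuclideanSpace ℝ (Fin n) := prox (x' - γ • (A x' + b)) with hqd'
      set R : ℝ := (1 / (2 * γ)) * ‖x' - x‖ ^ 2 - (1 / 2) * ⟪A (x' - x), x' - x⟫ with hRd
      -- upper bound on the error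
      have hub : φγ x' - φγ x - ⟪γ⁻¹ • ((x - q) - γ • A (x - q)), x' - x⟫ ≤ R := by
        linarith [h1, h2, hq]
      -- lower bound on the error
      have hlb : ⟪γ⁻¹ • ((x - q') - γ • A (x - q')), x' - x⟫ + R ≤ φγ x' - φγ x := by
        linarith [h3, h4, hq']
      have hdiff : ⟪γ⁻¹ • ((x - q') - γ • A (x - q')), x' - x⟫
          - ⟪γ⁻¹ • ((x - q) - γ • A (x - q)), x' - x⟫
          = ⟪γ⁻¹ • ((q - q') - γ • A (q - q')), x' - x⟫ := by
        rw [← inner_sub_left]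
        congr 1
        rw [← smul_sub]
        congr 1
        simp only [map_sub, smul_sub]
        abel
      have hPnorm : ‖q - q'‖ ≤ (1 + γ * ‖A‖) * ‖x' - x‖ := by
        rw [hqd, hqd']
        refine le_trans (hne _ _) ?_
        have hveq : (x - γ • (A x + b)) - (x' - γ • (A x' + b))
            = (x - x') - γ • A (x - x') := by
          rw [map_sub, smul_sub, smul_add, smul_add]
          abel
        rw [hveq]
        refine le_trans (norm_sub_le _ _) ?_
        rw [norm_smul, Real.norm_eq_abs, abs_of_pos hγ]
        have hAx : ‖A (x - x')‖ ≤ ‖A‖ * ‖x - x'‖ := A.le_opNorm _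
        have hxx : ‖x - x'‖ = ‖x' - x‖ := by rw [← norm_neg]; congr 1; abel
        rw [hxx] at hAx ⊢
        nlinarith [norm_nonneg (A (x - x')), norm_nonneg (x' - x)]
      have hDh : |⟪γ⁻¹ • ((q - q') - γ • A (q - q')), x' - x⟫|
          ≤ (γ⁻¹ + ‖A‖) * (1 + γ * ‖A‖) * ‖x' - x‖ ^ 2 := by
        refine le_trans (abs_real_inner_le_norm _ _) ?_
        have hDnorm : ‖γ⁻¹ • ((q - q') - γ • A (q - q'))‖
            ≤ (γ⁻¹ + ‖A‖) * ((1 + γ * ‖A‖) * ‖x' - x‖) := by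
          rw [norm_smul, Real.norm_eq_abs, abs_of_pos (by positivity : (0:ℝ) < γ⁻¹)]
          refine le_trans (mul_le_mul_of_nonneg_left (norm_sub_le _ _) (by positivity)) ?_
          have hAd : ‖A (q - q')‖ ≤ ‖A‖ * ‖q - q'‖ := A.le_opNorm _
          rw [norm_smul, Real.norm_eq_abs, abs_of_pos hγ]
          have hγγ : γ⁻¹ * γ = 1 := inv_mul_cancel₀ hγ'
          have hγinv : 0 < γ⁻¹ := by positivity
          nlinarith [hPnorm, hAd, norm_nonneg (q - q'), norm_nonneg (A (q - q')),
            norm_nonneg (x' - x), norm_nonneg A]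
        have := mul_le_mul_of_nonneg_right hDnorm (norm_nonneg (x' - x))
        nlinarith [norm_nonneg (x' - x)]
      have hRb : |R| ≤ ((1 / (2 * γ)) + ‖A‖ / 2) * ‖x' - x‖ ^ 2 := by
        rw [hRd]
        have hAh : |⟪A (x' - x), x' - x⟫| ≤ ‖A‖ * ‖x' - x‖ ^ 2 := by
          refine le_trans (abs_real_inner_le_norm _ _) ?_
          have := mul_le_mul_of_nonneg_right (A.le_opNorm (x' - x)) (norm_nonneg (x' - x))
          nlinarith [norm_nonneg (x' - x)]
        have h1 : 0 ≤ (1 / (2 * γ)) * ‖x' - x‖ ^ 2 := by positivity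
        rw [abs_le] at hAh ⊢
        constructor <;> nlinarith [hAh.1, hAh.2]
      have hcomb : |φγ x' - φγ x - ⟪γ⁻¹ • ((x - q) - γ • A (x - q)), x' - x⟫|
          ≤ |R| + |⟪γ⁻¹ • ((q - q') - γ • A (q - q')), x' - x⟫| := by
        generalize hDD : φγ x' - φγ x = DD at hub hlb ⊢
        generalize hVV : (inner ℝ (γ⁻¹ • (x - q - γ • A (x - q))) (x' - x) : ℝ) = VV at hub hdiff ⊢
        generalize hVV' : (inner ℝ (γ⁻¹ • (x - q' - γ • A (x - q'))) (x' - x) : ℝ) = VV' at hlb hdiff ⊢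
        generalize hWW : (inner ℝ (γ⁻¹ • (q - q' - γ • A (q - q'))) (x' - x) : ℝ) = WW at hdiff hDh ⊢
        have habs1 : (0:ℝ) ≤ |R| := abs_nonneg _
        have habs2 : (0:ℝ) ≤ |WW| := abs_nonneg _
        have hn1 := neg_abs_le R
        have hn2 : -|WW| ≤ WW := neg_abs_le WW
        have hra := le_abs_self R
        rw [abs_le]
        constructor
        · linarith [hlb, hdiff]
        · linarith [hub]
      rw [hCC]
      calc |φγ x' - φγ x - ⟪γ⁻¹ • ((x - q) - γ • A (x - q)), x' - x⟫|
          ≤ |R| + |⟪γ⁻¹ • ((q - q') - γ • A (q - q')), x' - x⟫| := hcomb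
        _ ≤ ((1 / (2 * γ)) + ‖A‖ / 2) * ‖x' - x‖ ^ 2
            + (γ⁻¹ + ‖A‖) * (1 + γ * ‖A‖) * ‖x' - x‖ ^ 2 := add_le_add hRb hDh
        _ = ((1 / (2 * γ)) + ‖A‖ / 2 + (γ⁻¹ + ‖A‖) * (1 + γ * ‖A‖)) * ‖x' - x‖ ^ 2 := by
            ring
    rw [Asymptotics.isLittleO_iff]
    intro ε hε
    have hball : ∀ᶠ x' in 𝓝 x, ‖x' - x‖ < ε / CC := by
      have hmem : Metric.ball x (ε / CC) ∈ 𝓝 x := Metric.ball_mem_nhds x (by positivity)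
      filter_upwards [hmem] with x' hx'
      rwa [Metric.mem_ball, dist_eq_norm] at hx'
    filter_upwards [hball] with x' hx'
    rw [Real.norm_eq_abs]
    calc |φγ x' - φγ x
        - ⟪γ⁻¹ • ((x - prox (x - γ • (A x + b))) -
            γ • A (x - prox (x - γ • (A x + b)))), x' - x⟫|
        ≤ CC * ‖x' - x‖ ^ 2 := hbound x'
      _ ≤ ε * ‖x' - x‖ := by
          have h1 : CC * ‖x' - x‖ ≤ ε := by
            have := mul_le_mul_of_nonneg_left (le_of_lt hx') (le_of_lt hCCpos)
            rw [mul_div_cancel₀ ε (ne_of_gt hCCpos)] at this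
            linarith
          nlinarith [norm_nonneg (x' - x)]
  refine ⟨hgrad, fun xb => ?_⟩
  have hiff1 : γ⁻¹ • ((xb - prox (xb - γ • (A xb + b))) -
      γ • A (xb - prox (xb - γ • (A xb + b)))) = 0 ↔ xb = prox (xb - γ • (A xb + b)) := by
    constructor
    · intro h0
      have hw0 : (xb - prox (xb - γ • (A xb + b)))
          - γ • A (xb - prox (xb - γ • (A xb + b))) = 0 := by
        rcases smul_eq_zero.mp h0 with h | h
        · exact absurd h (inv_ne_zero hγ')
        · exact h
      by_contra hne'
      have hwne : xb - prox (xb - γ • (A xb + b)) ≠ 0 := by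
        intro hc; exact hne' (by rwa [sub_eq_zero] at hc)
      have := hposdef _ hwne
      rw [hw0] at this
      simp at this
    · intro h
      have hw : xb - prox (xb - γ • (A xb + b)) = 0 := by rw [← h]; simp
      rw [hw]
      simp
  have hiff2 : xb = prox (xb - γ • (A xb + b)) ↔
      ∀ y, g xb + ((⟪-(A xb + b), y - xb⟫ : ℝ) : EReal) ≤ g y := by
    constructor
    · intro h y
      have hv := hVIE (xb - γ • (A xb + b)) y
      have hip : γ⁻¹ * ⟪xb - γ • (A xb + b) - prox (xb - γ • (A xb + b)),
          y - prox (xb - γ • (A xb + b))⟫ = ⟪-(A xb + b), y - xb⟫ := by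
        rw [← h]
        have hv2 : xb - γ • (A xb + b) - xb = (-γ) • (A xb + b) := by
          rw [neg_smul]; abel
        rw [hv2, real_inner_smul_left, inner_neg_left]
        field_simp
      rw [hip] at hv
      have hgxb : g xb = (((g (prox (xb - γ • (A xb + b)))).toReal : ℝ) : EReal) :=
        (congrArg g h).trans (hpfin _)
      rw [hgxb, ← EReal.coe_add]
      exact hv
    · intro hsub
      have hgtop : g xb ≠ ⊤ := by
        intro htop
        have h := hsub y₀
        rw [htop, hr₀, EReal.top_add_coe] at h
        exact (EReal.coe_lt_top _).not_ge h
      obtain ⟨gx, hgx⟩ : ∃ r : ℝ, g xb = (r : EReal) :=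
        ⟨(g xb).toReal, (EReal.coe_toReal hgtop (hnotbot xb)).symm⟩
      have h1 := hVI (xb - γ • (A xb + b)) xb gx hgx
      have h2 := hsub (prox (xb - γ • (A xb + b)))
      rw [hgx, hpfin (xb - γ • (A xb + b)), ← EReal.coe_add,
        EReal.coe_le_coe_iff] at h2
      set p : EuclideanSpace ℝ (Fin n) := prox (xb - γ • (A xb + b)) with hpd
      have hexp : γ⁻¹ * ⟪xb - γ • (A xb + b) - p, xb - p⟫
          = γ⁻¹ * ‖xb - p‖ ^ 2 - ⟪A xb + b, xb - p⟫ := by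
        have hv2 : xb - γ • (A xb + b) - p = (xb - p) - γ • (A xb + b) := by abel
        rw [hv2, inner_sub_left, real_inner_smul_left, ← real_inner_self_eq_norm_sq]
        field_simp
        try ring
      have h3 : ⟪-(A xb + b), p - xb⟫ = ⟪A xb + b, xb - p⟫ := by
        rw [inner_neg_left, ← inner_neg_right, neg_sub]
      rw [hexp] at h1
      rw [h3] at h2
      have hsq : γ⁻¹ * ‖xb - p‖ ^ 2 ≤ 0 := by linarith
      have hγinv : 0 < γ⁻¹ := by positivity
      have hn2 : ‖xb - p‖ ^ 2 ≤ 0 := by nlinarith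
      have hn0 : ‖xb - p‖ = 0 := by nlinarith [norm_nonneg (xb - p)]
      have hzero : xb - p = 0 := norm_eq_zero.mp hn0
      rwa [sub_eq_zero] at hzero
  exact ⟨hiff1, hiff1.trans hiff2⟩
end
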